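/- arXiv:1507.01219 — 2 statements merged into one kernel-verified Lean document; each statement's English description precedes it below -/
import Mathlib

section
/- Let 0 < q < 1 and define n_k = n_0 + k(k+1)/2 for k ≥ 0 (equivalently n_k = n_{k−1} + k). Then ∑_{k≥0} ∑_{l≥1} q^{(n_{k+l} − n_k)/4} ≤ q^{1/4} / ((1 − q^{1/4})·(1 − q^{1/8})). -/
/-!
Since `n_{k+l+1} - n_k = (l+1)(2k+l+2)/2 ≥ (l+1) + k/2`, each term is at most
`(q^{1/8})^k (q^{1/4})^{l+1}`, and the double sum of these products factors into two
geometric series with sums `1/(1 - q^{1/8})` and `q^{1/4}/(1 - q^{1/4})`.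
-/

open Real

theorem tsum_tsum_le_tsum_mul_tsum {ι κ : Type*} {f : ι → κ → ℝ} {g : ι → ℝ} {h : κ → ℝ}
    (hf : ∀ i j, 0 ≤ f i j) (hg : Summable g) (hh : Summable h)
    (hfgh : ∀ i j, f i j ≤ g i * h j) :
    ∑' i, ∑' j, f i j ≤ (∑' i, g i) * ∑' j, h j := by
  have hrow : ∀ i, ∑' j, f i j ≤ g i * ∑' j, h j := fun i => by
    rw [← tsum_mul_left]
    exact ((hh.mul_left _).of_nonneg_of_le (hf i) (hfgh i)).tsum_le_tsum (hfgh i) (hh.mul_left _)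
  rw [← tsum_mul_right]
  exact Summable.tsum_le_tsum hrow
    ((hg.mul_right _).of_nonneg_of_le (fun i => tsum_nonneg (hf i)) hrow) (hg.mul_right _)

theorem hasSum_geometric_succ_of_lt_one {r : ℝ} (h₀ : 0 ≤ r) (h₁ : r < 1) :
    HasSum (fun n : ℕ => r ^ (n + 1)) (r / (1 - r)) := by
  simpa only [pow_succ', div_eq_mul_inv] using (hasSum_geometric_of_lt_one h₀ h₁).mul_left r

theorem Nat.cast_mul_succ_div_two {K : Type*} [DivisionRing K] [CharZero K] (m : ℕ) :
    ((m * (m + 1) / 2 : ℕ) : K) = m * (m + 1) / 2 := by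
  rw [Nat.cast_div (Nat.even_mul_succ_self m).two_dvd two_ne_zero]
  push_cast
  rfl

theorem triangular_gap_ge {n : ℕ → ℕ} (hn : ∀ k, n k = n 0 + k * (k + 1) / 2) (k l : ℕ) :
    1 / 8 * (k : ℝ) + 1 / 4 * (l + 1 : ℕ) ≤ ((n (k + (l + 1)) : ℝ) - n k) / 4 := by
  have hgap : ((n (k + (l + 1)) : ℝ) - n k) / 4 = ((l : ℝ) + 1) * (2 * k + l + 2) / 8 := by
    rw [hn (k + (l + 1)), hn k]
    push_cast [Nat.cast_mul_succ_div_two]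
    ring
  rw [hgap]
  push_cast
  nlinarith [(Nat.cast_nonneg k : (0 : ℝ) ≤ k), (Nat.cast_nonneg l : (0 : ℝ) ≤ l)]

theorem rpow_le_rpow_pow_mul_rpow_pow {q x s t : ℝ} (hq₀ : 0 < q) (hq₁ : q ≤ 1)
    (k m : ℕ) (hx : s * k + t * m ≤ x) :
    q ^ x ≤ (q ^ s) ^ k * (q ^ t) ^ m := by
  rw [← rpow_mul_natCast hq₀.le, ← rpow_mul_natCast hq₀.le, ← rpow_add hq₀]
  exact rpow_le_rpow_of_exponent_ge hq₀ hq₁ (by linarith)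

/-- For `0 < q < 1` and the lacunary sequence `n_k = n_0 + k(k+1)/2` (i.e.
`n_k = n_{k-1} + k`), one has
`∑_{k≥0} ∑_{l≥1} q^((n_{k+l} − n_k)/4) ≤ q^(1/4) / ((1 − q^(1/4))·(1 − q^(1/8)))`. -/
theorem lacunary_double_sum_le (q : ℝ) (hq0 : 0 < q) (hq1 : q < 1)
    (n : ℕ → ℕ) (hn : ∀ k, n k = n 0 + k * (k + 1) / 2) :
    ∑' k : ℕ, ∑' l : ℕ,
        q ^ ((((n (k + (l + 1)) : ℝ)) - (n k : ℝ)) / 4)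
      ≤ q ^ ((1 : ℝ) / 4) / ((1 - q ^ ((1 : ℝ) / 4)) * (1 - q ^ ((1 : ℝ) / 8))) := by
  set a := q ^ ((1 : ℝ) / 4)
  set b := q ^ ((1 : ℝ) / 8)
  have ha : a < 1 := rpow_lt_one hq0.le hq1 (by norm_num)
  have hb : b < 1 := rpow_lt_one hq0.le hq1 (by norm_num)
  have hsum_a : HasSum (fun l : ℕ => a ^ (l + 1)) (a / (1 - a)) :=
    hasSum_geometric_succ_of_lt_one (rpow_nonneg hq0.le _) ha
  have hsum_b : HasSum (fun k : ℕ => b ^ k) (1 - b)⁻¹ :=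
    hasSum_geometric_of_lt_one (rpow_nonneg hq0.le _) hb
  have hterm : ∀ k l : ℕ, q ^ ((((n (k + (l + 1)) : ℝ)) - (n k : ℝ)) / 4) ≤ b ^ k * a ^ (l + 1) :=
    fun k l => rpow_le_rpow_pow_mul_rpow_pow hq0 hq1.le k (l + 1) (triangular_gap_ge hn k l)
  calc ∑' k : ℕ, ∑' l : ℕ, q ^ ((((n (k + (l + 1)) : ℝ)) - (n k : ℝ)) / 4)
      ≤ (∑' k : ℕ, b ^ k) * ∑' l : ℕ, a ^ (l + 1) :=
        tsum_tsum_le_tsum_mul_tsum (fun _ _ => rpow_nonneg hq0.le _) hsum_b.summable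
          hsum_a.summable hterm
    _ = a / ((1 - a) * (1 - b)) := by
        rw [hsum_b.tsum_eq, hsum_a.tsum_eq, div_eq_mul_inv a, div_eq_mul_inv a, mul_inv]
        ring
end

section
/- Let A be a unital C*-algebra, n ≥ 1, u ∈ Mₙ(A) a unitary matrix, Q ∈ Mₙ(ℂ) a positive invertible matrix with d = Tr(Q), V ∈ Mₙ(ℂ) a unitary matrix, and B ∈ Mₙ(ℂ) arbitrary. Then ‖(ι ⊗ Tr)[(1 ⊗ V·B·Q)·u]‖² ≤ d · Tr(B*·B·Q), where (ι ⊗ Tr)[(1 ⊗ M)·u] = ∑_{i,j} M_{ji} u_{ij} ∈ A. -/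
/-!
Write `Q = Cᴴ C` and `S = B Cᴴ`, so that `V B Q = V S C`, and let `N ↦ N̂` embed `Mₙ(ℂ)` into
`Mₙ(A)`. Scalar entries commute with `A`, so the element in question is `Tr(Ĉ (u (V S)̂))`.
The `A`-valued Hilbert–Schmidt pairing obeys Cauchy–Schwarz, `‖Tr(X Y)‖² ≤ ‖Tr(X Xᴴ)‖ ‖Tr(Yᴴ Y)‖`
(it is the inner product of the Hilbert `A`-module `A^(n×n)`). Here `Tr(C Cᴴ) = Tr Q = d`, and
since `u` and `V` are isometries, `(u (V S)̂)ᴴ (u (V S)̂) = (Sᴴ S)̂` with `Tr(Sᴴ S) = Tr(Bᴴ B Q)`.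
-/

open scoped ComplexOrder

open Matrix

theorem CStarAlgebra.norm_sum_mul_sq_le {A ι : Type*} [CStarAlgebra A] [Fintype ι] (a b : ι → A) :
    ‖∑ i, a i * b i‖ ^ 2 ≤ ‖∑ i, a i * star (a i)‖ * ‖∑ i, star (b i) * b i‖ := by
  let := CStarAlgebra.spectralOrder A
  have := CStarAlgebra.spectralOrderedRing A
  let x : WithCStarModule A (ι → A) := (WithCStarModule.equiv A _).symm (star b)
  let y : WithCStarModule A (ι → A) := (WithCStarModule.equiv A _).symm a
  have hxy : inner A x y = ∑ i, a i * b i := by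
    simp [x, y, WithCStarModule.pi_inner, WithCStarModule.inner_def]
  have hxx : ‖x‖ ^ 2 = ‖∑ i, star (b i) * b i‖ := by
    rw [CStarModule.norm_sq_eq (A := A)]
    simp [x, WithCStarModule.pi_inner, WithCStarModule.inner_def]
  have hyy : ‖y‖ ^ 2 = ‖∑ i, a i * star (a i)‖ := by
    rw [CStarModule.norm_sq_eq (A := A)]
    simp [y, WithCStarModule.pi_inner, WithCStarModule.inner_def]
  calc ‖∑ i, a i * b i‖ ^ 2 = ‖inner A x y‖ ^ 2 := by rw [hxy]
    _ ≤ (‖x‖ * ‖y‖) ^ 2 := by gcongr; exact CStarModule.norm_inner_le _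
    _ = _ := by rw [mul_pow, hxx, hyy, mul_comm]

theorem CStarRing.norm_algebraMap_le {𝕜 A : Type*} [NormedField 𝕜] [NormedRing A] [StarRing A]
    [CStarRing A] [NormedAlgebra 𝕜 A] (z : 𝕜) : ‖algebraMap 𝕜 A z‖ ≤ ‖z‖ := by
  nontriviality A
  rw [norm_algebraMap']

namespace Matrix

variable {m n : Type*}

theorem conjTranspose_map_algebraMap {R A : Type*} [CommSemiring R] [StarRing R] [Semiring A]
    [StarMul A] [Algebra R A] [StarModule R A] (N : Matrix m n R) :
    (N.map (algebraMap R A))ᴴ = Nᴴ.map (algebraMap R A) :=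
  (conjTranspose_map _ algebraMap_star_comm).symm

variable [Fintype m] [Fintype n]

theorem norm_trace_mul_sq_le {A : Type*} [CStarAlgebra A] (X : Matrix m n A) (Y : Matrix n m A) :
    ‖(X * Y).trace‖ ^ 2 ≤ ‖(X * Xᴴ).trace‖ * ‖(Yᴴ * Y).trace‖ := by
  simpa [trace, mul_apply, ← Finset.sum_product', Finset.univ_product_univ] using
    CStarAlgebra.norm_sum_mul_sq_le (fun p : m × n => X p.1 p.2) (fun p => Y p.2 p.1)

omit [Fintype n] in
theorem conjTranspose_mul_self_of_isometry_mul {α : Type*} [DecidableEq m] [Semiring α] [StarRing α]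
    {u : Matrix m m α} (hu : star u * u = 1) (P : Matrix m n α) :
    (u * P)ᴴ * (u * P) = Pᴴ * P := by
  rw [conjTranspose_mul, Matrix.mul_assoc, ← Matrix.mul_assoc uᴴ, ← star_eq_conjTranspose, hu,
    Matrix.one_mul]

section algebraMap

variable {R A : Type*} [CommSemiring R] [Semiring A] [Algebra R A]

theorem trace_map_algebraMap_mul (N : Matrix m n R) (P : Matrix n m A) :
    (N.map (algebraMap R A) * P).trace = ∑ i, ∑ j, N i j • P j i := by
  simp only [trace, diag, mul_apply, map_apply, Algebra.smul_def]

theorem trace_map_algebraMap_mul_comm (N : Matrix m n R) (P : Matrix n m A) :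
    (N.map (algebraMap R A) * P).trace = (P * N.map (algebraMap R A)).trace := by
  simp only [trace, diag, mul_apply, map_apply, Algebra.commutes]
  exact Finset.sum_comm

end algebraMap

theorem PosSemidef.norm_trace_map_algebraMap_le {A : Type*} [NormedRing A] [StarRing A]
    [CStarRing A] [NormedAlgebra ℂ A] {N : Matrix n n ℂ} (hN : N.PosSemidef) :
    ‖(N.map (algebraMap ℂ A)).trace‖ ≤ N.trace.re := by
  rw [← AddMonoidHom.map_trace, Complex.re_eq_norm.mpr hN.trace_nonneg]
  exact CStarRing.norm_algebraMap_le _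

end Matrix

theorem norm_sq_trace_mul_unitary_le_general {A : Type*} [NormedRing A] [StarRing A] [CStarRing A]
    [NormedAlgebra ℂ A] [StarModule ℂ A] [CompleteSpace A]
    {n : ℕ}
    (u : Matrix (Fin n) (Fin n) A)
    (hu₁ : star u * u = 1)
    (Q : Matrix (Fin n) (Fin n) ℂ) (hQ : Q.PosDef)
    (d : ℝ) (hd : Q.trace = (d : ℂ))
    (V : Matrix (Fin n) (Fin n) ℂ) (hV : star V * V = 1)
    (B : Matrix (Fin n) (Fin n) ℂ) :
    ‖∑ i : Fin n, ∑ j : Fin n, (V * B * Q) j i • u i j‖ ^ 2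
      ≤ d * ((B.conjTranspose * B * Q).trace).re := by
  let : CStarAlgebra A := ⟨⟩
  obtain ⟨C, rfl⟩ : ∃ C : Matrix (Fin n) (Fin n) ℂ, Q = Cᴴ * C := by
    open scoped MatrixOrder in
    exact CStarAlgebra.nonneg_iff_eq_star_mul_self.mp hQ.posSemidef.nonneg
  set S := B * Cᴴ
  have hx : ∑ i, ∑ j, (V * B * (Cᴴ * C)) j i • u i j
      = (C.map (algebraMap ℂ A) * (u * (V * S).map (algebraMap ℂ A))).trace := by
    rw [Finset.sum_comm, ← trace_map_algebraMap_mul, show V * B * (Cᴴ * C) = V * S * C by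
      simp only [S, Matrix.mul_assoc], Matrix.map_mul, Matrix.mul_assoc,
      trace_map_algebraMap_mul_comm, Matrix.mul_assoc]
  have hCC : C.map (algebraMap ℂ A) * (C.map (algebraMap ℂ A))ᴴ
      = (C * Cᴴ).map (algebraMap ℂ A) := by
    rw [conjTranspose_map_algebraMap, Matrix.map_mul]
  have hSS : (u * (V * S).map (algebraMap ℂ A))ᴴ * (u * (V * S).map (algebraMap ℂ A))
      = (Sᴴ * S).map (algebraMap ℂ A) := by
    rw [conjTranspose_mul_self_of_isometry_mul hu₁, conjTranspose_map_algebraMap, ← Matrix.map_mul,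
      conjTranspose_mul_self_of_isometry_mul hV]
  have hC := posSemidef_self_mul_conjTranspose C
  have hS := posSemidef_conjTranspose_mul_self S
  calc ‖∑ i, ∑ j, (V * B * (Cᴴ * C)) j i • u i j‖ ^ 2
      ≤ ‖((C * Cᴴ).map (algebraMap ℂ A)).trace‖ * ‖((Sᴴ * S).map (algebraMap ℂ A)).trace‖ := by
        rw [hx, ← hCC, ← hSS]; exact norm_trace_mul_sq_le _ _
    _ ≤ (C * Cᴴ).trace.re * (Sᴴ * S).trace.re :=
        mul_le_mul hC.norm_trace_map_algebraMap_le hS.norm_trace_map_algebraMap_le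
          (norm_nonneg _) (Complex.nonneg_iff.mp hC.trace_nonneg).1
    _ = d * ((Bᴴ * B * (Cᴴ * C)).trace).re := by
        rw [trace_mul_comm, hd, Complex.ofReal_re, conjTranspose_mul, conjTranspose_conjTranspose,
          Matrix.mul_assoc, trace_mul_comm C]
        simp only [S, Matrix.mul_assoc]

/-- Let `A` be a unital C*-algebra, `u ∈ Mₙ(A)` a unitary matrix, `Q` a positive invertible
complex `n × n` matrix with `d = Tr Q`, `V` a unitary complex matrix and `B` an arbitrary
complex matrix. Then `‖(ι ⊗ Tr)[(1 ⊗ V·B·Q)·u]‖² ≤ d · Tr(B*·B·Q)`, where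
`(ι ⊗ Tr)[(1 ⊗ M)·u] = ∑_{i,j} M_{ji} u_{ij}`. -/
theorem norm_sq_trace_mul_unitary_le {A : Type*} [NormedRing A] [StarRing A] [CStarRing A]
    [NormedAlgebra ℂ A] [StarModule ℂ A] [CompleteSpace A]
    {n : ℕ} (hn : 1 ≤ n)
    (u : Matrix (Fin n) (Fin n) A)
    (hu₁ : star u * u = 1) (hu₂ : u * star u = 1)
    (Q : Matrix (Fin n) (Fin n) ℂ) (hQ : Q.PosDef)
    (d : ℝ) (hd : Q.trace = (d : ℂ))
    (V : Matrix (Fin n) (Fin n) ℂ) (hV : star V * V = 1)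
    (B : Matrix (Fin n) (Fin n) ℂ) :
    ‖∑ i : Fin n, ∑ j : Fin n, (V * B * Q) j i • u i j‖ ^ 2
      ≤ d * ((B.conjTranspose * B * Q).trace).re :=
  norm_sq_trace_mul_unitary_le_general u hu₁ Q hQ d hd V hV B
end
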